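/- Fix r ∈ (0,1), let b(z) = (z − r)/(1 − rz), and define G(z) = (1/√2)(z², b(z)²) ∈ C², a map from the open unit disc D into the open unit ball B_2 of C². Then G is not bi-Lipschitz with respect to the pseudohyperbolic metrics: there is no constant c ≥ 1 such that c^{-1} d_D(z,w) ≤ d_ph(G(z), G(w)) ≤ c · d_D(z,w) for all z, w ∈ D, where d_D(z,w) = |z − w|/|1 − conj(w)z| is the pseudohyperbolic distance on D and d_ph is the pseudohyperbolic distance on B_2. -/

import Mathlib

open Metric

noncomputable section

open scoped Classical

/-- The projection `P_ν z = (⟨z,ν⟩/⟨ν,ν⟩)ν` (with the paper's inner product, linear in the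
first variable, i.e. `⟪ν, z⟫_ℂ` in Mathlib's convention), and `P_0 = 0`. -/
def ballProj (ν z : EuclideanSpace ℂ (Fin 2)) : EuclideanSpace ℂ (Fin 2) :=
  if ν = 0 then 0 else ((inner ℂ ν z : ℂ) / (inner ℂ ν ν : ℂ)) • ν

/-- The Möbius map `Φ_ν(z) = (ν − P_ν z − s_ν Q_ν z)/(1 − ⟨z,ν⟩)` of the open unit ball
of `ℂ²`. -/
def ballMobius (ν z : EuclideanSpace ℂ (Fin 2)) : EuclideanSpace ℂ (Fin 2) :=
  (1 - (inner ℂ ν z : ℂ))⁻¹ •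
    (ν - ballProj ν z - (Real.sqrt (1 - ‖ν‖ ^ 2) : ℂ) • (z - ballProj ν z))

/-- The pseudohyperbolic distance `d_ph(μ,ν) = ‖Φ_ν(μ)‖` on the open unit ball of `ℂ²`. -/
def pseudohyperbolicDist (μ ν : EuclideanSpace ℂ (Fin 2)) : ℝ := ‖ballMobius ν μ‖

/-- The pseudohyperbolic distance on the unit disc. -/
def discDist (z w : ℂ) : ℝ := ‖z - w‖ / ‖1 - (starRingEnd ℂ w) * z‖

/-!
The map `z ↦ -b(z)` is an involution of the disc that exchanges the two coordinates of `G`, so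
`G(z)` and `G(-b(z))` are mirror images in the diagonal of `ℂ²`: they have the same norm and a real
inner product. For such a pair `μ, ν` the identity
`1 - d_ph(μ,ν)² = (1 - ‖μ‖²)(1 - ‖ν‖²) / |1 - ⟨μ,ν⟩|²` gives `d_ph(μ,ν)² ≤ ‖μ - ν‖² / (1 - ‖μ‖²)`.
For real `x → 1` the numerator is of order `(1 - x)²` and the denominator of order `1 - x`, so
`d_ph(G(x), G(-b(x))) → 0`, whereas `d_D(x, -b(x)) ≥ x → 1`.
-/

open Filter Topology
open scoped InnerProductSpace ComplexConjugate

lemma norm_sq_ballMobius_numerator {μ ν : EuclideanSpace ℂ (Fin 2)} (hν : ‖ν‖ ≤ 1) :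
    ‖ν - ballProj ν μ - (Real.sqrt (1 - ‖ν‖ ^ 2) : ℂ) • (μ - ballProj ν μ)‖ ^ 2 =
      ‖1 - ⟪ν, μ⟫_ℂ‖ ^ 2 - (1 - ‖μ‖ ^ 2) * (1 - ‖ν‖ ^ 2) := by
  rcases eq_or_ne ν 0 with rfl | hν0
  · simp [ballProj]
  have hn : (‖ν‖ : ℂ) ≠ 0 := by simpa using hν0
  have hνν : ⟪ν, ν⟫_ℂ = (‖ν‖ : ℂ) ^ 2 := inner_self_eq_norm_sq_to_K ν
  have hs : Real.sqrt (1 - ‖ν‖ ^ 2) ^ 2 = 1 - ‖ν‖ ^ 2 := Real.sq_sqrt (by nlinarith [norm_nonneg ν])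
  set P := (⟪ν, μ⟫_ℂ / (‖ν‖ : ℂ) ^ 2) • ν with hP
  have hproj : ballProj ν μ = P := by
    rw [ballProj, if_neg hν0, hνν]
  have horth : ⟪ν, μ - P⟫_ℂ = 0 := by
    rw [inner_sub_right, hP, inner_smul_right, hνν]
    field_simp; ring
  have hPyth : ‖μ‖ ^ 2 = ‖P‖ ^ 2 + ‖μ - P‖ ^ 2 := by
    have := norm_add_sq_eq_norm_sq_add_norm_sq_of_inner_eq_zero (𝕜 := ℂ) P (μ - P)
      (by rw [hP, inner_smul_left, horth, mul_zero])
    rw [add_sub_cancel] at this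
    nlinarith
  have hνP : ν - P = (1 - ⟪ν, μ⟫_ℂ / (‖ν‖ : ℂ) ^ 2) • ν := by rw [hP, sub_smul, one_smul]
  have hsplit : ‖ν - P - (Real.sqrt (1 - ‖ν‖ ^ 2) : ℂ) • (μ - P)‖ ^ 2 =
      ‖ν - P‖ ^ 2 + (1 - ‖ν‖ ^ 2) * ‖μ - P‖ ^ 2 := by
    rw [@norm_sub_sq ℂ, inner_smul_right, hνP, inner_smul_left, horth,
      norm_smul (_ : ℂ) (μ - P), Complex.norm_real, Real.norm_of_nonneg (Real.sqrt_nonneg _),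
      mul_pow, hs]
    simp
  rw [hproj, hsplit, eq_sub_of_add_eq' hPyth.symm, hνP, hP, norm_smul, norm_smul,
    ← Complex.ofReal_pow]
  generalize ⟪ν, μ⟫_ℂ = a
  simp only [mul_pow, Complex.sq_norm, Complex.normSq_apply, Complex.sub_re, Complex.sub_im,
    Complex.div_ofReal_re, Complex.div_ofReal_im, Complex.one_re, Complex.one_im]
  field_simp
  ring

theorem one_sub_pseudohyperbolicDist_sq {μ ν : EuclideanSpace ℂ (Fin 2)} (hμ : ‖μ‖ < 1)
    (hν : ‖ν‖ < 1) :
    1 - pseudohyperbolicDist μ ν ^ 2 = (1 - ‖μ‖ ^ 2) * (1 - ‖ν‖ ^ 2) / ‖1 - ⟪ν, μ⟫_ℂ‖ ^ 2 := by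
  have hinner : ‖⟪ν, μ⟫_ℂ‖ < 1 :=
    (norm_inner_le_norm ν μ).trans_lt (mul_lt_one_of_nonneg_of_lt_one_left (norm_nonneg ν) hν hμ.le)
  have hden : ‖1 - ⟪ν, μ⟫_ℂ‖ ≠ 0 := by
    have := norm_sub_norm_le (1 : ℂ) ⟪ν, μ⟫_ℂ
    rw [norm_one] at this
    linarith
  rw [pseudohyperbolicDist, ballMobius, norm_smul, mul_pow, norm_sq_ballMobius_numerator hν.le,
    norm_inv, inv_pow]
  field_simp
  ring

theorem pseudohyperbolicDist_sq_le_of_norm_eq {μ ν : EuclideanSpace ℂ (Fin 2)} (hμ : ‖μ‖ < 1)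
    (hνμ : ‖ν‖ = ‖μ‖) (him : (⟪ν, μ⟫_ℂ).im = 0) :
    pseudohyperbolicDist μ ν ^ 2 ≤ ‖μ - ν‖ ^ 2 / (1 - ‖μ‖ ^ 2) := by
  have hid := one_sub_pseudohyperbolicDist_sq hμ (hνμ ▸ hμ)
  set m := ‖μ‖ ^ 2
  set α := (⟪ν, μ⟫_ℂ).re
  have hm1 : m < 1 := by nlinarith [norm_nonneg μ]
  have hα : α ≤ m := by
    have := (Complex.re_le_norm _).trans (norm_inner_le_norm (𝕜 := ℂ) ν μ)
    rw [hνμ] at this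
    nlinarith
  have hden : ‖1 - ⟪ν, μ⟫_ℂ‖ = 1 - α := by
    have : 1 - ⟪ν, μ⟫_ℂ = ((1 - α : ℝ) : ℂ) := Complex.ext (by simp [α]) (by simp [him])
    rw [this, Complex.norm_real, Real.norm_of_nonneg (by linarith)]
  have hdiff : ‖μ - ν‖ ^ 2 = 2 * (m - α) := by
    rw [@norm_sub_sq ℂ, hνμ, ← inner_conj_symm, RCLike.conj_re]
    simp only [RCLike.re_to_complex, m, α]
    ring
  have hα1 : 0 < 1 - α := by linarith
  have hd : pseudohyperbolicDist μ ν ^ 2 = (m - α) * (2 - α - m) / (1 - α) ^ 2 := by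
    rw [hνμ, hden] at hid
    rw [← sub_sub_cancel 1 (pseudohyperbolicDist μ ν ^ 2), hid]
    field_simp
    ring
  rw [hd, hdiff]
  calc (m - α) * (2 - α - m) / (1 - α) ^ 2 ≤ (m - α) * (2 * (1 - α)) / (1 - α) ^ 2 := by
        gcongr; linarith
    _ = 2 * (m - α) / (1 - α) := by field_simp
    _ ≤ 2 * (m - α) / (1 - m) := by gcongr

lemma norm_sq_toLp_pair (p q : ℂ) : ‖!₂[p, q]‖ ^ 2 = ‖p‖ ^ 2 + ‖q‖ ^ 2 := by
  simp [EuclideanSpace.norm_sq_eq, Fin.sum_univ_two]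

lemma inner_toLp_pair (p q p' q' : ℂ) :
    ⟪!₂[p, q], !₂[p', q']⟫_ℂ = conj p * p' + conj q * q' := by
  simp [PiLp.inner_apply, Fin.sum_univ_two, mul_comm]

lemma toLp_pair_sub (p q p' q' : ℂ) : !₂[p, q] - !₂[p', q'] = !₂[p - p', q - q'] := by
  rw [← WithLp.toLp_sub, Matrix.cons_sub_cons, Matrix.cons_sub_cons, Matrix.empty_sub_empty]

theorem pseudohyperbolicDist_swap_sq_le {p q : ℂ} (h : ‖p‖ ^ 2 + ‖q‖ ^ 2 < 1) :
    pseudohyperbolicDist !₂[p, q] !₂[q, p] ^ 2 ≤ 2 * ‖p - q‖ ^ 2 / (1 - ‖p‖ ^ 2 - ‖q‖ ^ 2) := by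
  have hμ : ‖!₂[p, q]‖ < 1 := by
    rw [← sq_lt_one_iff₀ (norm_nonneg _), norm_sq_toLp_pair]; exact h
  have hνμ : ‖!₂[q, p]‖ = ‖!₂[p, q]‖ := by
    rw [← sq_eq_sq₀ (norm_nonneg _) (norm_nonneg _), norm_sq_toLp_pair, norm_sq_toLp_pair, add_comm]
  have him : (⟪!₂[q, p], !₂[p, q]⟫_ℂ).im = 0 := by
    rw [inner_toLp_pair]
    simp only [Complex.add_im, Complex.mul_im, Complex.conj_re, Complex.conj_im]
    ring
  refine (pseudohyperbolicDist_sq_le_of_norm_eq hμ hνμ him).trans_eq ?_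
  rw [toLp_pair_sub, norm_sq_toLp_pair, norm_sq_toLp_pair, norm_sub_rev q p]
  ring

def blaschke {K : Type*} [Field K] (r z : K) : K := (z - r) / (1 - r * z)

section Blaschke
variable {K : Type*} [Field K] {r z : K}

lemma blaschke_neg_blaschke (hr : r ^ 2 ≠ 1) (hz : r * z ≠ 1) :
    blaschke r (-blaschke r z) = -z := by
  have hz' : 1 - r * z ≠ 0 := sub_ne_zero.2 hz.symm
  have hr' : 1 - r ^ 2 ≠ 0 := sub_ne_zero.2 hr.symm
  have hnum : -blaschke r z - r = -((1 - r ^ 2) * z) / (1 - r * z) := by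
    rw [eq_div_iff hz', blaschke, sub_mul, neg_mul, div_mul_cancel₀ _ hz']; ring
  have hden : 1 - r * -blaschke r z = (1 - r ^ 2) / (1 - r * z) := by
    rw [eq_div_iff hz', blaschke, sub_mul, mul_neg, neg_mul, mul_assoc, div_mul_cancel₀ _ hz']; ring
  rw [blaschke, hnum, hden, div_div_div_cancel_right₀ hz', neg_div, mul_div_cancel_left₀ _ hr']

lemma one_sub_blaschke_sq (hz : r * z ≠ 1) :
    1 - blaschke r z ^ 2 = (1 - r ^ 2) * (1 - z ^ 2) / (1 - r * z) ^ 2 := by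
  have hz' : (1 - r * z) ^ 2 ≠ 0 := pow_ne_zero 2 (sub_ne_zero.2 hz.symm)
  rw [blaschke, div_pow, eq_div_iff hz', sub_mul, div_mul_cancel₀ _ hz']
  ring

end Blaschke

@[simp, norm_cast]
lemma Complex.ofReal_blaschke (r x : ℝ) : ((blaschke r x : ℝ) : ℂ) = blaschke (r : ℂ) x := by
  simp [blaschke]

lemma blaschke_nonneg {r x : ℝ} (hrx : r ≤ x) (hrx1 : r * x < 1) : 0 ≤ blaschke r x :=
  div_nonneg (sub_nonneg.2 hrx) (sub_nonneg.2 hrx1.le)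

lemma blaschke_sq_lt_one {r x : ℝ} (hr : r ^ 2 < 1) (hx : x ^ 2 < 1) : blaschke r x ^ 2 < 1 := by
  have hrx : r * x ≠ 1 := fun h => by nlinarith
  have hpos : 0 < (1 - r ^ 2) * (1 - x ^ 2) / (1 - r * x) ^ 2 := by
    apply div_pos (mul_pos (by linarith) (by linarith)); positivity
  linarith [one_sub_blaschke_sq hrx]

def twistedDisc (r : ℝ) (z : ℂ) : EuclideanSpace ℂ (Fin 2) :=
  !₂[((Real.sqrt 2 : ℂ))⁻¹ * z ^ 2, ((Real.sqrt 2 : ℂ))⁻¹ * blaschke (r : ℂ) z ^ 2]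

lemma twistedDisc_neg_blaschke {r : ℝ} {z : ℂ} (hr : r ^ 2 ≠ 1) (hz : (r : ℂ) * z ≠ 1) :
    twistedDisc r (-blaschke (r : ℂ) z) =
      !₂[((Real.sqrt 2 : ℂ))⁻¹ * blaschke (r : ℂ) z ^ 2, ((Real.sqrt 2 : ℂ))⁻¹ * z ^ 2] := by
  rw [twistedDisc, blaschke_neg_blaschke (by exact_mod_cast hr) hz, neg_sq, neg_sq]

lemma pseudohyperbolicDist_twistedDisc_sq_le {r x : ℝ} (hr : r ^ 2 < 1) (hx : x ^ 2 < 1) :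
    pseudohyperbolicDist (twistedDisc r x) (twistedDisc r (-blaschke (r : ℂ) x)) ^ 2 ≤
      2 * (1 - x ^ 2) * ((1 - r ^ 2) / (1 - r * x) ^ 2 - 1) ^ 2 := by
  have hrx : r * x ≠ 1 := fun h => by nlinarith
  have hy := blaschke_sq_lt_one hr hx
  have hk := one_sub_blaschke_sq hrx
  rw [mul_div_right_comm] at hk
  set k := (1 - r ^ 2) / (1 - r * x) ^ 2
  set y := blaschke r x
  have hcast : ∀ a : ℝ, ((Real.sqrt 2 : ℂ))⁻¹ * (a : ℂ) ^ 2 = ((a ^ 2 / Real.sqrt 2 : ℝ) : ℂ) := by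
    intro a; push_cast; ring
  have hnorm : ∀ a b : ℝ, ‖((a / Real.sqrt 2 : ℝ) : ℂ) - ((b / Real.sqrt 2 : ℝ) : ℂ)‖ ^ 2 =
      (a - b) ^ 2 / 2 := by
    intro a b
    rw [← Complex.ofReal_sub, Complex.norm_real, Real.norm_eq_abs, sq_abs, ← sub_div, div_pow,
      Real.sq_sqrt zero_le_two]
  have hnorm0 : ∀ a : ℝ, ‖((a / Real.sqrt 2 : ℝ) : ℂ)‖ ^ 2 = a ^ 2 / 2 := by
    simpa using fun a => hnorm a 0
  rw [twistedDisc_neg_blaschke hr.ne (by exact_mod_cast hrx), ← Complex.ofReal_blaschke,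
    twistedDisc, ← Complex.ofReal_blaschke, hcast, hcast]
  have hD : (1 - x ^ 2) / 2 ≤ 1 - (x ^ 2) ^ 2 / 2 - (y ^ 2) ^ 2 / 2 := by nlinarith
  have hx0 : 0 < 1 - x ^ 2 := by linarith
  refine (pseudohyperbolicDist_swap_sq_le ?_).trans ?_
  · rw [hnorm0, hnorm0]; linarith
  rw [hnorm, hnorm0, hnorm0, show x ^ 2 - y ^ 2 = (k - 1) * (1 - x ^ 2) by linarith]
  calc 2 * (((k - 1) * (1 - x ^ 2)) ^ 2 / 2) / (1 - (x ^ 2) ^ 2 / 2 - (y ^ 2) ^ 2 / 2)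
      ≤ 2 * (((k - 1) * (1 - x ^ 2)) ^ 2 / 2) / ((1 - x ^ 2) / 2) := by gcongr
    _ = 2 * (1 - x ^ 2) * (k - 1) ^ 2 := by field_simp

lemma tendsto_pseudohyperbolicDist_twistedDisc_sq {r : ℝ} (hr : r ^ 2 < 1) :
    Tendsto (fun x : ℝ =>
        pseudohyperbolicDist (twistedDisc r x) (twistedDisc r (-blaschke (r : ℂ) x)) ^ 2)
      (𝓝[<] 1) (𝓝 0) := by
  have hbound : Tendsto (fun x : ℝ => 2 * (1 - x ^ 2) * ((1 - r ^ 2) / (1 - r * x) ^ 2 - 1) ^ 2)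
      (𝓝[<] 1) (𝓝 0) := by
    have : (1 - r * 1) ^ 2 ≠ 0 := by nlinarith
    have hcont : ContinuousAt
        (fun x : ℝ => 2 * (1 - x ^ 2) * ((1 - r ^ 2) / (1 - r * x) ^ 2 - 1) ^ 2) 1 := by
      fun_prop (disch := assumption)
    simpa using hcont.tendsto.mono_left nhdsWithin_le_nhds
  refine tendsto_of_tendsto_of_tendsto_of_le_of_le' tendsto_const_nhds hbound
    (Eventually.of_forall fun x => sq_nonneg _) ?_
  filter_upwards [Ioo_mem_nhdsLT (show (-1 : ℝ) < 1 by norm_num)] with x hx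
  exact pseudohyperbolicDist_twistedDisc_sq_le hr (by nlinarith [hx.1, hx.2])

lemma le_discDist_neg {x y : ℝ} (hx : 0 ≤ x) (hx1 : x ≤ 1) (hy : 0 ≤ y) :
    x ≤ discDist x (-(y : ℂ)) := by
  have hnum : (x : ℂ) - -(y : ℂ) = ((x + y : ℝ) : ℂ) := by push_cast; ring
  have hden : 1 - starRingEnd ℂ (-(y : ℂ)) * x = ((1 + y * x : ℝ) : ℂ) := by
    rw [map_neg, Complex.conj_ofReal]; push_cast; ring
  rw [discDist, hnum, hden, Complex.norm_real, Complex.norm_real,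
    Real.norm_of_nonneg (by positivity), Real.norm_of_nonneg (by positivity),
    le_div_iff₀ (by positivity)]
  nlinarith [mul_nonneg hy (mul_nonneg hx (sub_nonneg.2 hx1))]

lemma ofReal_mem_ball_zero_one {x : ℝ} (hx : x ^ 2 < 1) : (x : ℂ) ∈ ball (0 : ℂ) 1 := by
  rwa [mem_ball_zero_iff, Complex.norm_real, Real.norm_eq_abs, ← sq_lt_one_iff_abs_lt_one]

/-- The embedding `G(z) = (z²/√2, b(z)²/√2)` of the disc into the ball of `ℂ²` (with
`b(z) = (z−r)/(1−rz)`, `r ∈ (0,1)`) is not bi-Lipschitz for the pseudohyperbolic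
metrics. -/
theorem twisted_disc_not_biLipschitz (r : ℝ) (hr0 : 0 < r) (hr1 : r < 1)
    (b : ℂ → ℂ) (hbdef : ∀ z : ℂ, b z = (z - (r : ℂ)) / (1 - (r : ℂ) * z))
    (G : ℂ → EuclideanSpace ℂ (Fin 2))
    (hGdef : ∀ z : ℂ, G z = (WithLp.equiv 2 (Fin 2 → ℂ)).symm
      ![((Real.sqrt 2 : ℂ))⁻¹ * z ^ 2, ((Real.sqrt 2 : ℂ))⁻¹ * (b z) ^ 2]) :
    ¬ ∃ c : ℝ, 1 ≤ c ∧ ∀ z ∈ ball (0 : ℂ) 1, ∀ w ∈ ball (0 : ℂ) 1,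
        discDist z w / c ≤ pseudohyperbolicDist (G z) (G w) ∧
        pseudohyperbolicDist (G z) (G w) ≤ c * discDist z w := by
  rintro ⟨c, hc, h⟩
  obtain rfl : b = blaschke (r : ℂ) := funext hbdef
  obtain rfl : G = twistedDisc r := funext hGdef
  have hc0 : 0 < c := by linarith
  have hr2 : r ^ 2 < 1 := by nlinarith
  have hlow : ∀ᶠ x : ℝ in 𝓝[<] 1, (x / c) ^ 2 ≤
      pseudohyperbolicDist (twistedDisc r x) (twistedDisc r (-blaschke (r : ℂ) x)) ^ 2 := by
    filter_upwards [Ioo_mem_nhdsLT hr1] with x ⟨hrx, hx1⟩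
    have hx2 : x ^ 2 < 1 := by nlinarith
    have hyD : -blaschke (r : ℂ) x ∈ ball (0 : ℂ) 1 := by
      rw [← Complex.ofReal_blaschke, ← Complex.ofReal_neg]
      exact ofReal_mem_ball_zero_one (by rw [neg_sq]; exact blaschke_sq_lt_one hr2 hx2)
    have hdisc : x ≤ discDist x (-blaschke (r : ℂ) x) := by
      rw [← Complex.ofReal_blaschke]
      exact le_discDist_neg (by linarith) hx1.le (blaschke_nonneg hrx.le (by nlinarith))
    have hbound := (h _ (ofReal_mem_ball_zero_one hx2) _ hyD).1
    exact pow_le_pow_left₀ (div_nonneg (by linarith) hc0.le)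
      ((div_le_div_of_nonneg_right hdisc hc0.le).trans hbound) 2
  have hlim : Tendsto (fun x : ℝ => (x / c) ^ 2) (𝓝[<] 1) (𝓝 ((1 / c) ^ 2)) :=
    ((continuous_id.div_const c).pow 2).continuousAt.tendsto.mono_left nhdsWithin_le_nhds
  have := le_of_tendsto_of_tendsto hlim (tendsto_pseudohyperbolicDist_twistedDisc_sq hr2) hlow
  linarith [show 0 < (1 / c) ^ 2 by positivity]

end
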